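/- arXiv:2404.13427 — 3 statements merged into one kernel-verified Lean document; each statement's English description precedes it below -/
import Mathlib

section
/- Let g be a real-valued continuous compactly supported function on (0,∞), h(x) = ∫_0^∞ g(xy)g(y) dy, and define the convolution operator on L²((0,∞), dx/x) by (V(h)F)(x) = ∫_0^∞ h(x/λ) √(x/λ) F(λ) dλ/λ. Then V(h) is a positive operator: ⟨V(h)F, F⟩ ≥ 0 for all F in L²((0,∞), dx/x). -/
/-!
Put `q t = F t / √t`. Substituting `y ↦ l * y` in `h (x / l)` turns `⟨V(h)F, F⟩` into
`∫ x, ∫ l, ∫ y, g (x * y) q x * g (l * y) q l`, which by Fubini is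
`∫ y, (∫ t, g (t * y) q t) ^ 2 ≥ 0`.
Fubini applies by Schur's test: `|g| ≤ M · 1_[a,b]` with `0 < a`, and the kernel `1_[a,b] (t * y)`
has `∫ dt = (b - a) / y` and `∫ 1_[a,b] (t * y) (b - a) / y dy ≤ (b - a)² / a`, while
`∫ q² dt` is the square of the norm of `F` in `L²(dx/x)`.
-/

open MeasureTheory Set

/-- The multiplicative Haar measure `dx/x` on `(0,∞)`. -/
noncomputable def mulHaar : Measure ℝ :=
  (volume.restrict (Set.Ioi (0:ℝ))).withDensity fun x => ENNReal.ofReal x⁻¹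

open Function
open scoped ENNReal

section

variable {α β : Type*} [MeasurableSpace α] [MeasurableSpace β] {μ : Measure α} {ν : Measure β}

theorem sq_lintegral_mul_le {k f : α → ℝ≥0∞} (hk : Measurable k) (hf : Measurable f) :
    (∫⁻ x, k x * f x ∂μ) ^ 2 ≤ (∫⁻ x, k x ∂μ) * ∫⁻ x, k x * f x ^ 2 ∂μ := by
  have holder := ENNReal.lintegral_mul_le_Lp_mul_Lq (μ.withDensity k) Real.HolderConjugate.two_two
    hf.aemeasurable (aemeasurable_const (b := (1 : ℝ≥0∞)))
  simp only [ENNReal.rpow_two, one_pow, lintegral_one] at holder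
  rw [lintegral_withDensity_eq_lintegral_mul _ hk (hf.mul measurable_const),
    withDensity_apply _ MeasurableSet.univ, Measure.restrict_univ,
    lintegral_withDensity_eq_lintegral_mul _ hk (hf.pow_const 2)] at holder
  calc (∫⁻ x, k x * f x ∂μ) ^ 2
      ≤ ((∫⁻ x, k x * f x ^ 2 ∂μ) ^ (1 / 2 : ℝ) * (∫⁻ x, k x ∂μ) ^ (1 / 2 : ℝ)) ^ 2 := by
        simpa using pow_le_pow_left' holder 2
    _ = (∫⁻ x, k x ∂μ) * ∫⁻ x, k x * f x ^ 2 ∂μ := by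
        rw [mul_pow, ← ENNReal.rpow_natCast, ← ENNReal.rpow_natCast, ← ENNReal.rpow_mul,
          ← ENNReal.rpow_mul]
        norm_num [mul_comm]

variable [SFinite μ] [SFinite ν]

theorem lintegral_sq_lintegral_mul_le {K : α → β → ℝ≥0∞} (hK : Measurable (uncurry K))
    {f : α → ℝ≥0∞} (hf : Measurable f) {A : β → ℝ≥0∞} (hA : Measurable A) {B : ℝ≥0∞}
    (hKA : ∀ᵐ y ∂ν, ∫⁻ x, K x y ∂μ ≤ A y) (hKB : ∀ᵐ x ∂μ, ∫⁻ y, K x y * A y ∂ν ≤ B) :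
    ∫⁻ y, (∫⁻ x, K x y * f x ∂μ) ^ 2 ∂ν ≤ B * ∫⁻ x, f x ^ 2 ∂μ := by
  have hKy (y : β) : Measurable (K · y) := hK.comp (measurable_id.prodMk measurable_const)
  have hKx (x : α) : Measurable (K x) := hK.comp (measurable_const.prodMk measurable_id)
  calc ∫⁻ y, (∫⁻ x, K x y * f x ∂μ) ^ 2 ∂ν
      ≤ ∫⁻ y, ∫⁻ x, A y * (K x y * f x ^ 2) ∂μ ∂ν := by
        refine lintegral_mono_ae ?_
        filter_upwards [hKA] with y hy
        have hm : Measurable fun x => K x y * f x ^ 2 := (hKy y).mul (hf.pow_const 2)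
        rw [lintegral_const_mul _ hm]
        exact (sq_lintegral_mul_le (hKy y) hf).trans (mul_le_mul_left hy _)
    _ = ∫⁻ x, f x ^ 2 * ∫⁻ y, K x y * A y ∂ν ∂μ := by
        rw [lintegral_lintegral_swap (by fun_prop)]
        refine lintegral_congr fun x => ?_
        have hm : Measurable fun y => K x y * A y := (hKx x).mul hA
        rw [← lintegral_const_mul _ hm]
        exact lintegral_congr fun y => by ring
    _ ≤ ∫⁻ x, f x ^ 2 * B ∂μ := lintegral_mono_ae (hKB.mono fun x hx => by gcongr)
    _ = B * ∫⁻ x, f x ^ 2 ∂μ := by rw [lintegral_mul_const _ (hf.pow_const 2), mul_comm]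

theorem lintegral_enorm_mul_eq_lintegral_sq {W : α → β → ℝ} (hW : Measurable (uncurry W)) :
    ∫⁻ p, ‖W p.1.1 p.2 * W p.1.2 p.2‖ₑ ∂(μ.prod μ).prod ν
      = ∫⁻ y, (∫⁻ x, ‖W x y‖ₑ ∂μ) ^ 2 ∂ν := by
  have hWy (y : β) : Measurable (W · y) := hW.comp (measurable_id.prodMk measurable_const)
  rw [← lintegral_prod_swap, lintegral_prod _ (by fun_prop)]
  refine lintegral_congr fun y => ?_
  simp only [Prod.swap_prod_mk, enorm_mul]
  rw [lintegral_prod_mul (hWy y).enorm.aemeasurable (hWy y).enorm.aemeasurable, sq]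

theorem integrable_mul_of_lintegral_sq_lt_top {W : α → β → ℝ} (hW : Measurable (uncurry W))
    (hfin : ∫⁻ y, (∫⁻ x, ‖W x y‖ₑ ∂μ) ^ 2 ∂ν < ∞) :
    Integrable (fun p : (α × α) × β => W p.1.1 p.2 * W p.1.2 p.2) ((μ.prod μ).prod ν) :=
  ⟨by fun_prop, by rwa [HasFiniteIntegral, lintegral_enorm_mul_eq_lintegral_sq hW]⟩

theorem integral_integral_integral_mul_nonneg {W : α → β → ℝ}
    (hW : Integrable (fun p : (α × α) × β => W p.1.1 p.2 * W p.1.2 p.2) ((μ.prod μ).prod ν)) :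
    0 ≤ ∫ x, ∫ l, ∫ y, W x y * W l y ∂ν ∂μ ∂μ := by
  rw [integral_integral hW.integral_prod_left, integral_integral_swap hW]
  refine integral_nonneg fun y => ?_
  rw [integral_prod_mul (W · y) (W · y)]
  exact mul_self_nonneg _

end

theorem lintegral_Ioi_indicator_Icc_mul_le (a b : ℝ) {y : ℝ} (hy : 0 < y) :
    ∫⁻ t in Ioi 0, (Icc a b).indicator 1 (t * y) ≤ ENNReal.ofReal ((b - a) / y) :=
  calc ∫⁻ t in Ioi 0, (Icc a b).indicator 1 (t * y)
      ≤ ∫⁻ t, ((· * y) ⁻¹' Icc a b).indicator 1 t := setLIntegral_le_lintegral _ _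
    _ = ENNReal.ofReal ((b - a) / y) := by
        rw [lintegral_indicator_one (measurableSet_Icc.preimage (measurable_mul_const y)),
          Real.volume_preimage_mul_right hy.ne', Real.volume_Icc, abs_of_pos (inv_pos.2 hy),
          ← ENNReal.ofReal_mul (inv_pos.2 hy).le, inv_mul_eq_div]

theorem lintegral_Ioi_indicator_Icc_mul_div_le {a b t : ℝ} (ha : 0 < a) (hab : a ≤ b)
    (ht : 0 < t) :
    ∫⁻ y in Ioi 0, (Icc a b).indicator 1 (t * y) * ENNReal.ofReal ((b - a) / y)
      ≤ ENNReal.ofReal ((b - a) ^ 2 / a) := by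
  have hpt : ∀ y ∈ Ioi (0 : ℝ), (Icc a b).indicator 1 (t * y) * ENNReal.ofReal ((b - a) / y)
      ≤ ENNReal.ofReal ((b - a) * t / a) * (Icc a b).indicator 1 (y * t) := by
    intro y (hy : 0 < y)
    rw [mul_comm y t]
    by_cases hmem : t * y ∈ Icc a b
    · simp only [indicator_of_mem hmem, Pi.one_apply, one_mul, mul_one]
      refine ENNReal.ofReal_le_ofReal ?_
      rw [div_le_div_iff₀ hy ha]
      nlinarith [hmem.1]
    · simp [indicator_of_notMem hmem]
  calc _ ≤ ∫⁻ y in Ioi 0, ENNReal.ofReal ((b - a) * t / a) * (Icc a b).indicator 1 (y * t) :=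
        setLIntegral_mono' measurableSet_Ioi hpt
    _ ≤ ENNReal.ofReal ((b - a) * t / a) * ENNReal.ofReal ((b - a) / t) := by
        have hm : Measurable fun y => (Icc a b).indicator (1 : ℝ → ℝ≥0∞) (y * t) :=
          (measurable_one.indicator measurableSet_Icc).comp (measurable_mul_const t)
        rw [lintegral_const_mul _ hm]
        gcongr
        exact lintegral_Ioi_indicator_Icc_mul_le a b ht
    _ = ENNReal.ofReal ((b - a) ^ 2 / a) := by
        rw [← ENNReal.ofReal_mul (by have := sub_nonneg.2 hab; positivity)]
        congr 1
        field_simp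

theorem lintegral_Ioi_enorm_div_sqrt_sq {F : ℝ → ℝ} (hF : Measurable F) :
    ∫⁻ t in Ioi 0, ‖F t / √t‖ₑ ^ 2 = ∫⁻ t, ‖F t‖ₑ ^ 2 ∂mulHaar := by
  rw [mulHaar, lintegral_withDensity_eq_lintegral_mul _ measurable_inv.ennreal_ofReal
    (hF.enorm.pow_const 2)]
  refine setLIntegral_congr_fun measurableSet_Ioi fun t (ht : 0 < t) => ?_
  simp only [Pi.mul_apply, Real.enorm_eq_ofReal_abs]
  rw [← ENNReal.ofReal_pow (abs_nonneg _), ← ENNReal.ofReal_pow (abs_nonneg _),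
    ← ENNReal.ofReal_mul (inv_pos.2 ht).le, sq_abs, sq_abs, div_pow, Real.sq_sqrt ht.le,
    inv_mul_eq_div]

theorem MemLp.lintegral_enorm_sq_lt_top {α : Type*} [MeasurableSpace α] {μ : Measure α}
    {F : α → ℝ} (hF : MemLp F 2 μ) : ∫⁻ t, ‖F t‖ₑ ^ 2 ∂μ < ∞ := by
  simpa only [HasFiniteIntegral, enorm_pow] using ((memLp_two_iff_integrable_sq hF.1).1 hF).2

theorem IsCompact.exists_subset_Icc_of_subset_Ioi {K : Set ℝ} (hK : IsCompact K)
    (hKpos : K ⊆ Ioi 0) : ∃ a b, 0 < a ∧ a ≤ b ∧ K ⊆ Icc a b := by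
  rcases K.eq_empty_or_nonempty with rfl | hne
  · exact ⟨1, 1, one_pos, le_rfl, empty_subset _⟩
  · exact ⟨sInf K, sSup K, hKpos (hK.sInf_mem hne), csInf_le_csSup hne hK.bddBelow hK.bddAbove,
      fun x hx => ⟨csInf_le hK.bddBelow hx, le_csSup hK.bddAbove hx⟩⟩

theorem integral_Ioi_div_mul_mul_eq (g : ℝ → ℝ) {x l : ℝ} (hl : 0 < l) :
    ∫ y in Ioi 0, g (x / l * y) * g y = l * ∫ y in Ioi 0, g (x * y) * g (l * y) := by
  have hcv := integral_comp_mul_left_Ioi (fun y => g (x / l * y) * g y) 0 hl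
  have harg (y : ℝ) : x / l * (l * y) = x * y := by rw [← mul_assoc, div_mul_cancel₀ x hl.ne']
  simp only [mul_zero, smul_eq_mul, harg] at hcv
  rw [hcv, mul_inv_cancel_left₀ hl.ne']

theorem restrict_Ioi_absolutelyContinuous_mulHaar : volume.restrict (Ioi (0 : ℝ)) ≪ mulHaar :=
  withDensity_absolutelyContinuous' measurable_inv.ennreal_ofReal.aemeasurable
    ((ae_restrict_mem measurableSet_Ioi).mono fun _ hx => by simpa using hx)

noncomputable def mulConvInner (h F : ℝ → ℝ) : ℝ :=
  ∫ x in Ioi 0, (∫ l in Ioi 0, h (x / l) * √(x / l) * F l / l) * F x / x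

theorem mulConvInner_congr_ae {h F F' : ℝ → ℝ} (hF : F =ᵐ[volume.restrict (Ioi 0)] F') :
    mulConvInner h F = mulConvInner h F' := by
  have hinner (x : ℝ) : ∫ l in Ioi 0, h (x / l) * √(x / l) * F l / l
      = ∫ l in Ioi 0, h (x / l) * √(x / l) * F' l / l :=
    integral_congr_ae (hF.mono fun l hl => by simp only [hl])
  exact integral_congr_ae (hF.mono fun x hx => by simp only [hinner, hx])

noncomputable def factorKernel (g F : ℝ → ℝ) (t y : ℝ) : ℝ := g (t * y) * (F t / √t)

theorem mulConvInner_eq_integral_factorKernel {g h : ℝ → ℝ}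
    (hh : ∀ x, h x = ∫ y in Ioi (0:ℝ), g (x * y) * g y) (F : ℝ → ℝ) :
    mulConvInner h F = ∫ x in Ioi 0, ∫ l in Ioi 0, ∫ y in Ioi 0,
      factorKernel g F x y * factorKernel g F l y := by
  refine setIntegral_congr_fun measurableSet_Ioi fun x (hx : 0 < x) => ?_
  rw [← integral_mul_const, ← integral_div]
  refine setIntegral_congr_fun measurableSet_Ioi fun l (hl : 0 < l) => ?_
  simp only [factorKernel, hh, integral_Ioi_div_mul_mul_eq g hl]
  have hfactor : ∫ y in Ioi 0, g (x * y) * (F x / √x) * (g (l * y) * (F l / √l))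
      = (∫ y in Ioi 0, g (x * y) * g (l * y)) * (F x / √x * (F l / √l)) := by
    rw [← integral_mul_const]
    exact integral_congr_ae (Filter.Eventually.of_forall fun y => by ring)
  rw [hfactor, Real.sqrt_div hx.le]
  field_simp
  rw [Real.sq_sqrt hx.le]
  ring

theorem measurable_factorKernel {g F : ℝ → ℝ} (hg : Continuous g) (hF : Measurable F) :
    Measurable (uncurry (factorKernel g F)) := by
  unfold factorKernel
  fun_prop

theorem enorm_factorKernel_le {g : ℝ → ℝ} {M a b : ℝ} (hM : ∀ s, ‖g s‖ ≤ M)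
    (hsub : tsupport g ⊆ Icc a b) (F : ℝ → ℝ) (t y : ℝ) :
    ‖factorKernel g F t y‖ₑ
      ≤ (Icc a b).indicator 1 (t * y) * (ENNReal.ofReal M * ‖F t / √t‖ₑ) := by
  rw [factorKernel, enorm_mul]
  by_cases hmem : t * y ∈ Icc a b
  · rw [indicator_of_mem hmem, Pi.one_apply, one_mul, ← ofReal_norm]
    gcongr
    exact hM _
  · simp [image_eq_zero_of_notMem_tsupport fun h => hmem (hsub h)]

theorem integrable_factorKernel_mul {g F : ℝ → ℝ} (hg : Continuous g) (hgc : HasCompactSupport g)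
    (hgs : tsupport g ⊆ Ioi 0) (hFm : Measurable F) (hF : MemLp F 2 mulHaar) :
    Integrable (fun p : (ℝ × ℝ) × ℝ => factorKernel g F p.1.1 p.2 * factorKernel g F p.1.2 p.2)
      (((volume.restrict (Ioi 0)).prod (volume.restrict (Ioi 0))).prod
        (volume.restrict (Ioi 0))) := by
  obtain ⟨M, hM⟩ := hg.bounded_above_of_compact_support hgc
  obtain ⟨a, b, ha, hab, hsub⟩ := hgc.isCompact.exists_subset_Icc_of_subset_Ioi hgs
  set f : ℝ → ℝ≥0∞ := fun t => ENNReal.ofReal M * ‖F t / √t‖ₑ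
  have hf : Measurable f := by fun_prop
  refine integrable_mul_of_lintegral_sq_lt_top (measurable_factorKernel hg hFm) ?_
  calc ∫⁻ y in Ioi 0, (∫⁻ t in Ioi 0, ‖factorKernel g F t y‖ₑ) ^ 2
      ≤ ∫⁻ y in Ioi 0, (∫⁻ t in Ioi 0, (Icc a b).indicator 1 (t * y) * f t) ^ 2 := by
        gcongr with y t
        exact enorm_factorKernel_le hM hsub F t y
    _ ≤ ENNReal.ofReal ((b - a) ^ 2 / a) * ∫⁻ t in Ioi 0, f t ^ 2 := by
        refine lintegral_sq_lintegral_mul_le ?_ hf (A := fun y => ENNReal.ofReal ((b - a) / y))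
          (by fun_prop) ?_ ?_
        · exact (measurable_one.indicator measurableSet_Icc).comp measurable_mul
        · filter_upwards [ae_restrict_mem measurableSet_Ioi] with y hy
          exact lintegral_Ioi_indicator_Icc_mul_le a b hy
        · filter_upwards [ae_restrict_mem measurableSet_Ioi] with t ht
          exact lintegral_Ioi_indicator_Icc_mul_div_le ha hab ht
    _ < ∞ := by
        simp only [f, mul_pow]
        rw [lintegral_const_mul _ (by fun_prop), lintegral_Ioi_enorm_div_sqrt_sq hFm]
        exact ENNReal.mul_lt_top ENNReal.ofReal_lt_top
          (ENNReal.mul_lt_top (ENNReal.pow_lt_top ENNReal.ofReal_lt_top)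
            (MemLp.lintegral_enorm_sq_lt_top hF))

/-- The convolution operator `V(h)` associated to `h(x) = ∫_0^∞ g(xy) g(y) dy` is a positive
operator on `L²((0,∞), dx/x)`:  `⟨V(h)F, F⟩ ≥ 0`. -/
theorem stmt3 (g : ℝ → ℝ) (hg : Continuous g) (hgc : HasCompactSupport g)
    (hgs : tsupport g ⊆ Set.Ioi 0)
    (h : ℝ → ℝ) (hh : ∀ x, h x = ∫ y in Set.Ioi (0:ℝ), g (x * y) * g y)
    (F : ℝ → ℝ) (hF : MemLp F 2 mulHaar) :
    0 ≤ ∫ x in Set.Ioi (0:ℝ),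
        (∫ l in Set.Ioi (0:ℝ), h (x / l) * Real.sqrt (x / l) * F l / l) * F x / x := by
  have hFm := hF.1.aemeasurable
  have hFF' : F =ᵐ[mulHaar] hFm.mk F := hFm.ae_eq_mk
  change 0 ≤ mulConvInner h F
  rw [mulConvInner_congr_ae (restrict_Ioi_absolutelyContinuous_mulHaar.ae_eq hFF'),
    mulConvInner_eq_integral_factorKernel hh]
  exact integral_integral_integral_mul_nonneg <|
    integrable_factorKernel_mul hg hgc hgs hFm.measurable_mk (hF.ae_eq hFF')
end

section
/- Let s be complex with 0 < Re(s) < 1. For every real a > 0, the tail integral ∫_a^∞ t^{s-1} cos t dt satisfies the bound |∫_a^∞ t^{s-1} cos t dt| ≤ a^{Re(s)-1}(1 + |s-1|/(1 - Re(s))). -/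
open Filter MeasureTheory Set Topology Complex

/-!
Integrating by parts against `sin`, which is bounded by `1`,
`∫_a^N t^{s-1} cos t dt = N^{s-1} sin N - a^{s-1} sin a - (s-1) ∫_a^N t^{s-2} sin t dt`.
As `N → ∞` the boundary term at `N` vanishes because `Re s < 1`, and the last integral converges
absolutely since `Re (s - 2) < -1`; its absolute value is at most
`∫_a^∞ t^{Re s - 2} dt = a^{Re s - 1} / (1 - Re s)`.
-/

theorem norm_cpow_mul_sin_le (t : ℝ) (c : ℂ) : ‖(t : ℂ) ^ c * Real.sin t‖ ≤ ‖(t : ℂ) ^ c‖ := by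
  rw [norm_mul, norm_real]
  exact mul_le_of_le_one_right (norm_nonneg _) (Real.abs_sin_le_one t)

theorem hasDerivAt_ofReal_cpow_const_of_pos {t : ℝ} (ht : 0 < t) (c : ℂ) :
    HasDerivAt (fun y : ℝ => (y : ℂ) ^ c) (c * (t : ℂ) ^ (c - 1)) t := by
  simpa using ((hasDerivAt_id (t : ℂ)).cpow_const (ofReal_mem_slitPlane.2 ht)).comp_ofReal

theorem tendsto_cpow_mul_sin_atTop {c : ℂ} (hc : c.re < 0) :
    Tendsto (fun N : ℝ => (N : ℂ) ^ c * Real.sin N) atTop (𝓝 0) := by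
  refine squeeze_zero_norm' ?_ (tendsto_rpow_neg_atTop (neg_pos.2 hc))
  filter_upwards [eventually_gt_atTop 0] with N hN
  simpa [norm_cpow_eq_rpow_re_of_pos hN] using norm_cpow_mul_sin_le N c

section

variable {a : ℝ} {c : ℂ}

theorem integrableOn_Ioi_cpow_mul_sin (hc : c.re < -1) (ha : 0 < a) :
    IntegrableOn (fun t : ℝ => (t : ℂ) ^ c * Real.sin t) (Ioi a) := by
  refine Integrable.mono (integrableOn_Ioi_cpow_of_lt hc ha) ?_
    (ae_of_all _ fun t => norm_cpow_mul_sin_le t c)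
  refine ContinuousOn.aestronglyMeasurable (fun t ht => ?_) measurableSet_Ioi
  exact ((continuousAt_ofReal_cpow_const _ _ (Or.inr (ha.trans ht).ne')).mul
    (continuous_ofReal.comp Real.continuous_sin).continuousAt).continuousWithinAt

theorem norm_integral_Ioi_cpow_mul_sin_le (hc : c.re < -1) (ha : 0 < a) :
    ‖∫ t in Ioi a, (t : ℂ) ^ c * Real.sin t‖ ≤ a ^ (c.re + 1) / -(c.re + 1) := by
  have hbound : ∀ t ∈ Ioi a, ‖(t : ℂ) ^ c * Real.sin t‖ ≤ t ^ c.re := fun t ht => by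
    simpa [norm_cpow_eq_rpow_re_of_pos (ha.trans ht)] using norm_cpow_mul_sin_le t c
  calc ‖∫ t in Ioi a, (t : ℂ) ^ c * Real.sin t‖ ≤ ∫ t in Ioi a, t ^ c.re :=
        norm_integral_le_of_norm_le (integrableOn_Ioi_rpow_of_lt hc ha)
          ((ae_restrict_iff' measurableSet_Ioi).2 (ae_of_all _ hbound))
    _ = a ^ (c.re + 1) / -(c.re + 1) := by rw [integral_Ioi_rpow_of_lt hc ha, div_neg, neg_div]

theorem integral_cpow_mul_cos_eq (ha : 0 < a) {N : ℝ} (hN : a ≤ N) (c : ℂ) :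
    ∫ t in a..N, (t : ℂ) ^ c * Real.cos t =
      (N : ℂ) ^ c * Real.sin N - (a : ℂ) ^ c * Real.sin a
        - ∫ t in a..N, c * (t : ℂ) ^ (c - 1) * Real.sin t := by
  have hpos : ∀ t ∈ uIcc a N, 0 < t := fun t ht =>
    ha.trans_le (by rw [uIcc_of_le hN] at ht; exact ht.1)
  refine intervalIntegral.integral_mul_deriv_eq_deriv_mul
    (fun t ht => hasDerivAt_ofReal_cpow_const_of_pos (hpos t ht) c)
    (fun t _ => (Real.hasDerivAt_sin t).ofReal_comp) ?_
    (Continuous.intervalIntegrable (by fun_prop) _ _)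
  refine (ContinuousOn.mul continuousOn_const fun t ht => ?_).intervalIntegrable
  exact (continuousAt_ofReal_cpow_const _ _ (Or.inr (hpos t ht).ne')).continuousWithinAt

theorem tendsto_integral_cpow_mul_cos (hc : c.re < 0) (ha : 0 < a) :
    Tendsto (fun N : ℝ => ∫ t in a..N, (t : ℂ) ^ c * Real.cos t) atTop
      (𝓝 (-((a : ℂ) ^ c * Real.sin a) - c * ∫ t in Ioi a, (t : ℂ) ^ (c - 1) * Real.sin t)) := by
  have hc' : (c - 1).re < -1 := by rw [sub_re, one_re]; linarith
  have hI := intervalIntegral_tendsto_integral_Ioi a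
    ((integrableOn_Ioi_cpow_mul_sin hc' ha).const_mul c) tendsto_id
  have hlim := ((tendsto_cpow_mul_sin_atTop hc).sub_const ((a : ℂ) ^ c * Real.sin a)).sub hI
  rw [zero_sub, integral_const_mul] at hlim
  refine hlim.congr' ?_
  filter_upwards [eventually_ge_atTop a] with N hN
  simp only [id, mul_assoc, integral_cpow_mul_cos_eq ha hN]

end

theorem stmt8_general (s : ℂ) (h1 : s.re < 1) (a : ℝ) (ha : 0 < a) :
    ∃ L : ℂ, Tendsto (fun N : ℝ => ∫ t in a..N, (t : ℂ) ^ (s - 1) * Real.cos t)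
        atTop (nhds L) ∧
      ‖L‖ ≤ a ^ (s.re - 1) * (1 + ‖s - 1‖ / (1 - s.re)) := by
  have hc : (s - 1).re < 0 := by simpa using h1
  have hc' : (s - 1 - 1).re < -1 := by rw [sub_re, one_re]; linarith
  refine ⟨_, tendsto_integral_cpow_mul_cos hc ha, ?_⟩
  have hboundary : ‖(a : ℂ) ^ (s - 1) * Real.sin a‖ ≤ a ^ (s.re - 1) := by
    simpa [norm_cpow_eq_rpow_re_of_pos ha] using norm_cpow_mul_sin_le a (s - 1)
  have htail := norm_integral_Ioi_cpow_mul_sin_le hc' ha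
  simp only [sub_re, one_re, sub_add_cancel, neg_sub] at htail
  calc _ ≤ ‖(a : ℂ) ^ (s - 1) * Real.sin a‖
          + ‖s - 1‖ * ‖∫ t in Ioi a, (t : ℂ) ^ (s - 1 - 1) * Real.sin t‖ :=
        (norm_sub_le _ _).trans_eq (by rw [norm_neg, norm_mul (s - 1)])
    _ ≤ a ^ (s.re - 1) + ‖s - 1‖ * (a ^ (s.re - 1) / (1 - s.re)) := by gcongr
    _ = a ^ (s.re - 1) * (1 + ‖s - 1‖ / (1 - s.re)) := by ring

/-- For `0 < Re s < 1` and `a > 0`, the tail integral `∫_a^∞ t^{s-1} cos t dt` converges and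
satisfies `|∫_a^∞ t^{s-1} cos t dt| ≤ a^{Re s - 1} (1 + |s-1|/(1 - Re s))`. -/
theorem stmt8 (s : ℂ) (h0 : 0 < s.re) (h1 : s.re < 1) (a : ℝ) (ha : 0 < a) :
    ∃ L : ℂ, Tendsto (fun N : ℝ => ∫ t in a..N, (t : ℂ) ^ (s - 1) * Real.cos t)
        atTop (nhds L) ∧
      ‖L‖ ≤ a ^ (s.re - 1) * (1 + ‖s - 1‖ / (1 - s.re)) :=
  stmt8_general s h1 a ha
end

section
/- Fix Λ > 1 and 0 < μ < 1. Let g : (0,∞) → ℝ be supported in (√μ, 1/√μ), let S_Λ(t) = 1 if t > 1/Λ and 0 otherwise, and let g*(x) = x⁻¹ g(x⁻¹). Define B on L²((0,∞), dz/z) by (BF)(z) = (1 + |log z|) ∫_0^∞ [S_Λ(z) - S_Λ(y)] g*(z/y) √(z/y) F(y) dy/y. Then B is a Hilbert–Schmidt operator, i.e. its kernel (1+|log z|)[S_Λ(z)-S_Λ(y)] g*(z/y)√(z/y) is square-integrable on (0,∞)² with respect to (dz/z)(dy/y). -/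
open MeasureTheory

/-!
The kernel is bounded on compact subsets of the open quadrant, and it vanishes off the box
`[√μ/Λ, 1/(√μ Λ)]²`: the factor `g*(z/y)` forces `√μ < z/y < 1/√μ`, while `S_Λ(z) - S_Λ(y) ≠ 0`
puts `z` and `y` on opposite sides of `1/Λ`. The box has finite `dz/z ⊗ dy/y` measure, so the
kernel is dominated by a multiple of its indicator.
-/

open Set

instance : SFinite mulHaar := by
  unfold mulHaar
  infer_instance

theorem MeasureTheory.MemLp.of_bound_on_of_ae_support_subset {α E : Type*} [MeasurableSpace α]
    [NormedAddCommGroup E] {μ : Measure α} {f : α → E} {A : Set α} {C : ℝ} (p : ENNReal)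
    (hf : AEStronglyMeasurable f μ) (hA : MeasurableSet A) (hμA : μ A ≠ ⊤)
    (hsupp : ∀ᵐ x ∂μ, f x ≠ 0 → x ∈ A) (hbd : ∀ x ∈ A, ‖f x‖ ≤ C) : MemLp f p μ := by
  refine (memLp_indicator_const p hA C (Or.inr hμA)).mono hf ?_
  filter_upwards [hsupp] with x hx
  by_cases hxA : x ∈ A
  · rw [indicator_of_mem hxA]
    exact (hbd x hxA).trans (le_abs_self C)
  · rw [not_not.1 (mt hx hxA), norm_zero]
    exact norm_nonneg _

lemma mulHaar_Icc_lt_top {a : ℝ} (ha : 0 < a) (b : ℝ) : mulHaar (Icc a b) < ⊤ := by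
  rw [mulHaar, withDensity_apply _ measurableSet_Icc]
  calc ∫⁻ x in Icc a b, ENNReal.ofReal x⁻¹ ∂volume.restrict (Ioi 0)
      ≤ ∫⁻ x in Icc a b, ENNReal.ofReal x⁻¹ :=
        lintegral_mono' (Measure.restrict_mono subset_rfl Measure.restrict_le_self) le_rfl
    _ < ⊤ := Integrable.lintegral_lt_top <| ContinuousOn.integrableOn_Icc <|
        continuousOn_inv₀.mono fun x hx => (ha.trans_le hx.1).ne'

lemma ae_mulHaar_pos : ∀ᵐ x ∂mulHaar, 0 < x :=
  (withDensity_absolutelyContinuous _ _).ae_le (ae_restrict_mem measurableSet_Ioi)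

lemma ae_mulHaar_prod_pos : ∀ᵐ p ∂mulHaar.prod mulHaar, 0 < p.1 ∧ 0 < p.2 :=
  (Measure.quasiMeasurePreserving_fst.ae ae_mulHaar_pos).and
    (Measure.quasiMeasurePreserving_snd.ae ae_mulHaar_pos)

/-- The kernel of `B`, with `c = Λ⁻¹` the jump of `S_Λ`. -/
noncomputable def kernelB (c : ℝ) (gs : ℝ → ℝ) (p : ℝ × ℝ) : ℝ :=
  (1 + |Real.log p.1|) * ((if c < p.1 then (1:ℝ) else 0) - (if c < p.2 then (1:ℝ) else 0)) *
    gs (p.1 / p.2) * Real.sqrt (p.1 / p.2)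

lemma measurable_kernelB {c : ℝ} {gs : ℝ → ℝ} (hgs : Measurable gs) :
    Measurable (kernelB c gs) := by
  have hjump : ∀ i : ℝ × ℝ → ℝ, Measurable i → Measurable fun p => if c < i p then (1:ℝ) else 0 :=
    fun i hi =>
      Measurable.ite (measurableSet_lt measurable_const hi) measurable_const measurable_const
  have := hjump _ measurable_fst
  have := hjump _ measurable_snd
  unfold kernelB
  fun_prop

lemma mem_Icc_of_straddle {s c z y : ℝ} (hs0 : 0 < s) (hs1 : s ≤ 1) (hc : 0 ≤ c)
    (hzy : s * z < y) (hcz : c < z) (hyc : y ≤ c) :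
    z ∈ Icc (s * c) (c / s) ∧ y ∈ Icc (s * c) (c / s) :=
  ⟨⟨(mul_le_of_le_one_left hc hs1).trans hcz.le, (le_div_iff₀' hs0).2 (hzy.le.trans hyc)⟩,
    ⟨(mul_le_mul_of_nonneg_left hcz.le hs0.le).trans hzy.le, hyc.trans (le_div_self hc hs0 hs1)⟩⟩

lemma mem_Icc_prod_of_kernelB_ne_zero {s c : ℝ} {gs : ℝ → ℝ} (hs0 : 0 < s) (hs1 : s ≤ 1)
    (hc : 0 ≤ c) (hgs : ∀ x, 0 < x → gs x ≠ 0 → x ∈ Ioo s s⁻¹) {p : ℝ × ℝ} (hz : 0 < p.1)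
    (hy : 0 < p.2) (hp : kernelB c gs p ≠ 0) :
    p ∈ Icc (s * c) (c / s) ×ˢ Icc (s * c) (c / s) := by
  obtain ⟨z, y⟩ := p
  simp only [kernelB, ne_eq, mul_eq_zero, not_or] at hp hz hy
  obtain ⟨⟨⟨-, hjump⟩, hgz⟩, -⟩ := hp
  obtain ⟨hyz, hzy⟩ := hgs _ (div_pos hz hy) hgz
  rw [lt_div_iff₀ hy] at hyz
  rw [div_lt_iff₀ hy, ← div_eq_inv_mul, lt_div_iff₀' hs0] at hzy
  split_ifs at hjump with hcz hcy hcy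
  · exact absurd (sub_self _) hjump
  · exact mem_Icc_of_straddle hs0 hs1 hc hzy hcz (not_lt.1 hcy)
  · exact (mem_Icc_of_straddle hs0 hs1 hc hyz hcy (not_lt.1 hcz)).symm
  · exact absurd (sub_self _) hjump

lemma exists_bound_kernelB {a b c M : ℝ} {g gs : ℝ → ℝ} (ha : 0 < a) (hM : ∀ x, |g x| ≤ M)
    (hgs : ∀ x, gs x = g x⁻¹ / x) :
    ∃ C, ∀ p ∈ Icc a b ×ˢ Icc a b, |kernelB c gs p| ≤ C := by
  set F : ℝ × ℝ → ℝ := fun p => (1 + |Real.log p.1|) * Real.sqrt (p.1 / p.2) / (p.1 / p.2)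
  have hF : ContinuousOn F (Icc a b ×ˢ Icc a b) := fun p hp => by
    have hz : p.1 ≠ 0 := (ha.trans_le hp.1.1).ne'
    have hy : p.2 ≠ 0 := (ha.trans_le hp.2.1).ne'
    exact ContinuousAt.continuousWithinAt (by fun_prop (disch := simp [hz, hy]))
  obtain ⟨C, hC⟩ := (isCompact_Icc.prod isCompact_Icc).exists_bound_of_continuousOn hF
  refine ⟨C * M, fun p hp => ?_⟩
  have hjump : |(if c < p.1 then (1:ℝ) else 0) - (if c < p.2 then (1:ℝ) else 0)| ≤ 1 := by
    split_ifs <;> norm_num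
  have hsplit : kernelB c gs p =
      F p * ((if c < p.1 then (1:ℝ) else 0) - (if c < p.2 then (1:ℝ) else 0)) *
        g (p.1 / p.2)⁻¹ := by
    simp only [kernelB, F, hgs]
    ring
  have hFp : |F p| ≤ C := hC p hp
  have hC0 : 0 ≤ C := (abs_nonneg _).trans hFp
  rw [hsplit, abs_mul, abs_mul, ← mul_one C]
  exact mul_le_mul (mul_le_mul hFp hjump (abs_nonneg _) hC0) (hM _) (abs_nonneg _) (by positivity)

/-- The operator `B` with kernel `(1+|log z|)[S_Λ(z)-S_Λ(y)] g*(z/y) √(z/y)` is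
Hilbert–Schmidt: its kernel is square-integrable on `(0,∞)²` for `(dz/z)(dy/y)`. -/
theorem stmt12 (Λ μ : ℝ) (hΛ : 1 < Λ) (hμ0 : 0 < μ) (hμ1 : μ < 1)
    (g : ℝ → ℝ) (hmeas : Measurable g) (hbd : ∃ M, ∀ x, |g x| ≤ M)
    (hsupp : ∀ x, x ∉ Set.Ioo (Real.sqrt μ) (Real.sqrt μ)⁻¹ → g x = 0)
    (gs : ℝ → ℝ) (hgs : ∀ x, gs x = g x⁻¹ / x) :
    MemLp (fun p : ℝ × ℝ =>
        (1 + |Real.log p.1|) *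
          ((if Λ⁻¹ < p.1 then (1:ℝ) else 0) - (if Λ⁻¹ < p.2 then (1:ℝ) else 0)) *
            gs (p.1 / p.2) * Real.sqrt (p.1 / p.2))
      2 (mulHaar.prod mulHaar) := by
  obtain ⟨M, hM⟩ := hbd
  set s := Real.sqrt μ
  have hs0 : 0 < s := Real.sqrt_pos.2 hμ0
  have hc : 0 < Λ⁻¹ := inv_pos.2 (zero_lt_one.trans hΛ)
  have hgs_supp : ∀ x, 0 < x → gs x ≠ 0 → x ∈ Ioo s s⁻¹ := fun x hx hne => by
    have h : x⁻¹ ∈ Ioo s s⁻¹ := by_contra fun h => hne (by rw [hgs, hsupp _ h, zero_div])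
    exact ⟨(inv_lt_inv₀ hx hs0).1 h.2, (lt_inv_comm₀ hx hs0).2 h.1⟩
  have hgs_meas : Measurable gs := by
    rw [funext hgs]
    fun_prop
  have hbox : (mulHaar.prod mulHaar) (Icc (s * Λ⁻¹) (Λ⁻¹ / s) ×ˢ Icc (s * Λ⁻¹) (Λ⁻¹ / s)) ≠ ⊤ := by
    have hfin := mulHaar_Icc_lt_top (mul_pos hs0 hc) (Λ⁻¹ / s)
    rw [Measure.prod_prod]
    exact ENNReal.mul_ne_top hfin.ne hfin.ne
  obtain ⟨C, hC⟩ := exists_bound_kernelB (c := Λ⁻¹) (mul_pos hs0 hc) hM hgs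
  exact MemLp.of_bound_on_of_ae_support_subset 2 (measurable_kernelB hgs_meas).aestronglyMeasurable
    (measurableSet_Icc.prod measurableSet_Icc) hbox
    (ae_mulHaar_prod_pos.mono fun p hp =>
      mem_Icc_prod_of_kernelB_ne_zero hs0 (Real.sqrt_le_one.2 hμ1.le) hc.le hgs_supp hp.1 hp.2) hC
end
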